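/- Let a ∈ (0,1), λ > 0, and z > 0. Then |λ · ln( z⁻¹ · (1 − exp(−z(1−a))) )| ≤ C·λ + λ·ln(z)·𝟙[z > 1], where C > 0 is a constant depending only on a (one may take C = max(|ln(1−e^{−1+a})|, |ln(1−a)|)). -/
import Mathlib


theorem stmt_0 (a lam z : ℝ) (ha : a ∈ Set.Ioo (0:ℝ) 1) (hlam : 0 < lam) (hz : 0 < z) :
    |lam * Real.log (z⁻¹ * (1 - Real.exp (-z * (1 - a))))| ≤
      (max |Real.log (1 - Real.exp (-1 + a))| |Real.log (1 - a)|) * lam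
        + lam * Real.log z * (if 1 < z then 1 else 0) := by
  obtain ⟨ha0, ha1⟩ := ha
  have he1 : Real.exp (-1 + a) < 1 := by
    rw [Real.exp_lt_one_iff]; linarith
  have hE : 0 < 1 - Real.exp (-1 + a) := by linarith
  have habs1 : |Real.log (1 - Real.exp (-1 + a))| = -Real.log (1 - Real.exp (-1 + a)) := by
    rw [abs_of_nonpos (Real.log_nonpos hE.le (by nlinarith [Real.exp_pos (-1+a)]))]
  have hmax1 : -Real.log (1 - Real.exp (-1 + a)) ≤
      max |Real.log (1 - Real.exp (-1 + a))| |Real.log (1 - a)| := by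
    rw [← habs1]; exact le_max_left _ _
  have hexpz1 : Real.exp (-z * (1 - a)) < 1 := by
    rw [Real.exp_lt_one_iff]; nlinarith
  have hwpos : 0 < z⁻¹ * (1 - Real.exp (-z * (1 - a))) :=
    mul_pos (inv_pos.2 hz) (by linarith)
  rw [abs_mul, abs_of_pos hlam]
  by_cases hz1 : 1 < z
  · simp only [if_pos hz1]
    have hlogz : 0 < Real.log z := Real.log_pos hz1
    have hexple : Real.exp (-z * (1 - a)) ≤ Real.exp (-1 + a) := by
      apply Real.exp_le_exp.2; nlinarith
    have hub : Real.log (z⁻¹ * (1 - Real.exp (-z * (1 - a)))) ≤ -Real.log z := by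
      rw [← Real.log_inv z]
      apply Real.log_le_log hwpos
      have h1 : 1 - Real.exp (-z * (1 - a)) ≤ 1 := by
        have := Real.exp_pos (-z * (1 - a)); linarith
      nlinarith [inv_pos.2 hz]
    have hlb : Real.log z⁻¹ + Real.log (1 - Real.exp (-1 + a)) ≤
        Real.log (z⁻¹ * (1 - Real.exp (-z * (1 - a)))) := by
      rw [← Real.log_mul (by positivity) (by linarith)]
      apply Real.log_le_log (by positivity)
      have h2 : 1 - Real.exp (-1 + a) ≤ 1 - Real.exp (-z * (1 - a)) := by linarith
      nlinarith [inv_pos.2 hz]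
    rw [Real.log_inv] at hlb
    have habs : |Real.log (z⁻¹ * (1 - Real.exp (-z * (1 - a))))| ≤
        Real.log z - Real.log (1 - Real.exp (-1 + a)) := by
      rw [abs_le]; constructor <;> linarith
    nlinarith [mul_le_mul_of_nonneg_left habs hlam.le]
  · simp only [if_neg hz1]
    have hzle : z ≤ 1 := le_of_not_gt hz1
    -- convexity: exp(-z*(1-a)) ≤ (1-z)*1 + z*exp(-(1-a))
    have hconv : Real.exp (-z * (1 - a)) ≤ (1 - z) * 1 + z * Real.exp (-(1 - a)) := by
      have := convexOn_exp.2 (Set.mem_univ (0:ℝ)) (Set.mem_univ (-(1 - a)))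
        (by linarith : (0:ℝ) ≤ 1 - z) hz.le (by ring)
      simp only [smul_eq_mul, mul_zero, Real.exp_zero, mul_one] at this
      have heq : -z * (1 - a) = (1 - z) * 0 + z * -(1 - a) := by ring
      rw [heq]
      simpa [smul_eq_mul] using this
    have hexpeq : Real.exp (-(1 - a)) = Real.exp (-1 + a) := by ring_nf
    rw [hexpeq] at hconv
    -- lower bound: w ≥ 1 - exp(-1+a)
    have hlb : 1 - Real.exp (-1 + a) ≤ z⁻¹ * (1 - Real.exp (-z * (1 - a))) := by
      have h : z * (1 - Real.exp (-1 + a)) ≤ 1 - Real.exp (-z * (1 - a)) := by nlinarith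
      calc 1 - Real.exp (-1 + a) = z⁻¹ * (z * (1 - Real.exp (-1 + a))) := by
            field_simp
        _ ≤ z⁻¹ * (1 - Real.exp (-z * (1 - a))) := by
            apply mul_le_mul_of_nonneg_left h (inv_pos.2 hz).le
    -- upper bound: w ≤ 1 - a
    have hub : z⁻¹ * (1 - Real.exp (-z * (1 - a))) ≤ 1 - a := by
      have h : 1 - Real.exp (-z * (1 - a)) ≤ z * (1 - a) := by
        have := Real.add_one_le_exp (-z * (1 - a)); linarith
      calc z⁻¹ * (1 - Real.exp (-z * (1 - a))) ≤ z⁻¹ * (z * (1 - a)) :=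
            mul_le_mul_of_nonneg_left h (inv_pos.2 hz).le
        _ = 1 - a := by field_simp
    have hlog_ub : Real.log (z⁻¹ * (1 - Real.exp (-z * (1 - a)))) ≤ Real.log (1 - a) :=
      Real.log_le_log hwpos hub
    have hlog_lb : Real.log (1 - Real.exp (-1 + a)) ≤
        Real.log (z⁻¹ * (1 - Real.exp (-z * (1 - a)))) :=
      Real.log_le_log hE hlb
    have hloga : Real.log (1 - a) ≤ |Real.log (1 - a)| := le_abs_self _
    have habs : |Real.log (z⁻¹ * (1 - Real.exp (-z * (1 - a))))| ≤
        max |Real.log (1 - Real.exp (-1 + a))| |Real.log (1 - a)| := by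
      rw [abs_le]; constructor
      · have := le_max_left |Real.log (1 - Real.exp (-1 + a))| |Real.log (1 - a)|
        rw [habs1] at *; linarith
      · have := le_max_right |Real.log (1 - Real.exp (-1 + a))| |Real.log (1 - a)|
        linarith
    nlinarith [mul_le_mul_of_nonneg_left habs hlam.le]
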